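/- arXiv:2407.21625 — 2 statements merged into one kernel-verified Lean document; each statement's English description precedes it below -/
import Mathlib

section
/- Let B ~ Binomial(k, 1/n) with k ≤ n/2 and let x ≥ 7/2. Then (E[B | B ≥ x] − x) · P[B ≥ x] ≤ (1/(x−1)) · exp(−(x − 1/2)). -/
open Finset

/-- Probability mass function of `Binomial(k, p)`. -/
noncomputable def binomialPMF (k : ℕ) (p : ℝ) (i : ℕ) : ℝ :=
  (k.choose i : ℝ) * p ^ i * (1 - p) ^ (k - i)

/-- `P[B ≥ x]` for `B ~ Binomial(k, 1/n)`. -/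
noncomputable def binTail (n k : ℕ) (x : ℝ) : ℝ :=
  ∑ i ∈ Finset.range (k + 1), if x ≤ (i : ℝ) then binomialPMF k (1 / (n : ℝ)) i else 0

/-- `E[B | B ≥ x]` for `B ~ Binomial(k, 1/n)`. -/
noncomputable def binCondExp (n k : ℕ) (x : ℝ) : ℝ :=
  (∑ i ∈ Finset.range (k + 1),
      if x ≤ (i : ℝ) then (i : ℝ) * binomialPMF k (1 / (n : ℝ)) i else 0) / binTail n k x

/-!
Since `k / n ≤ 1 / 2`, the binomial weights satisfy `P[B = i] ≤ (1/2)^i / i!`. With `m = ⌈x⌉`,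
the excess `∑_{i ≥ m} (i - x) (1/2)^i / i!` is dominated by a geometric series of ratio
`1 / (m + 1)`, because `i - x ≤ (i - m) + 1 ≤ 2^(i - m)` and `i! ≥ m! (m + 1)^(i - m)`. The
resulting bound `(1/2)^m (m + 1) / (m · m!)` is at most `e^{-(m - 1/2)} / (m - 1)` because `e < 3`
and `m 3^m ≤ 2^m m!` for `m ≥ 4`, and this is at most the claimed bound since `x ≤ m`.
-/

open Real Nat

lemma binomialPMF_le_pow_div_factorial {k : ℕ} {p : ℝ} (hp₀ : 0 ≤ p) (hp₁ : p ≤ 1) (i : ℕ) :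
    binomialPMF k p i ≤ (k * p) ^ i / i ! := calc
  binomialPMF k p i ≤ k.choose i * p ^ i := by
    unfold binomialPMF
    exact mul_le_of_le_one_right (by positivity) (pow_le_one₀ (by linarith) (by linarith))
  _ ≤ k ^ i / i ! * p ^ i := by gcongr; exact Nat.choose_le_pow_div i k
  _ = (k * p) ^ i / i ! := by ring

lemma binCondExp_sub_mul_binTail {n k : ℕ} {x : ℝ} (h : binTail n k x ≠ 0) :
    (binCondExp n k x - x) * binTail n k x =
      ∑ i ∈ range (k + 1), if x ≤ i then (i - x) * binomialPMF k (1 / n) i else 0 := by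
  rw [binCondExp, sub_mul, div_mul_cancel₀ _ h, binTail, mul_sum, ← sum_sub_distrib]
  refine sum_congr rfl fun i _ => ?_
  split_ifs <;> ring

lemma succ_mul_half_pow_div_factorial_le (m j : ℕ) :
    (j + 1 : ℝ) * ((1 / 2) ^ (m + j) / (m + j)!) ≤ (1 / 2) ^ m / m ! * (1 / (m + 1)) ^ j := by
  have hj : (j + 1 : ℝ) ≤ 2 ^ j := by exact_mod_cast Nat.lt_two_pow_self
  have hfac : (m ! * (m + 1) ^ j : ℝ) ≤ (m + j)! := by
    exact_mod_cast Nat.factorial_mul_pow_le_factorial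
  calc (j + 1 : ℝ) * ((1 / 2) ^ (m + j) / (m + j)!)
      ≤ 2 ^ j * ((1 / 2) ^ (m + j) / (m ! * (m + 1) ^ j)) := by gcongr
    _ = (1 / 2) ^ m / m ! * (1 / (m + 1)) ^ j := by
      simp only [pow_add, one_div_pow]
      field_simp

lemma sum_excess_mul_half_pow_div_factorial_le {x : ℝ} (hx : 0 < x) (N : ℕ) :
    ∑ i ∈ range N, (if x ≤ i then (i - x) * ((1 / 2) ^ i / i !) else 0)
      ≤ (1 / 2) ^ ⌈x⌉₊ / ⌈x⌉₊ ! * ((⌈x⌉₊ + 1) / ⌈x⌉₊) := by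
  set m := ⌈x⌉₊
  have hm : (0 : ℝ) < m := by exact_mod_cast Nat.ceil_pos.mpr hx
  have hmx : (m : ℝ) < x + 1 := Nat.ceil_lt_add_one hx.le
  have hfilter : (range N).filter (fun i : ℕ => x ≤ i) = Ico m N := by
    ext i
    simp only [mem_filter, mem_range, mem_Ico, m, Nat.ceil_le]
    tauto
  set r : ℝ := 1 / (m + 1)
  have hr₀ : 0 ≤ r := by positivity
  have hr₁ : r < 1 := by
    rw [div_lt_one (by linarith)]
    linarith
  rw [← sum_filter, hfilter, sum_Ico_eq_sum_range]
  calc ∑ j ∈ range (N - m), ((m + j : ℕ) - x) * ((1 / 2 : ℝ) ^ (m + j) / (m + j)!)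
      ≤ ∑ j ∈ range (N - m), (1 / 2) ^ m / m ! * r ^ j := by
        refine sum_le_sum fun j _ => le_trans ?_ (succ_mul_half_pow_div_factorial_le m j)
        gcongr
        push_cast
        linarith
    _ ≤ (1 / 2) ^ m / m ! * (1 / (1 - r)) := by
        rw [← mul_sum, range_eq_Ico]
        gcongr
        simpa using geom_sum_Ico_le_of_lt_one hr₀ hr₁ (m := 0) (n := N - m)
    _ = (1 / 2) ^ m / m ! * ((m + 1) / m) := by
        have h₁r : 1 - r = m / (m + 1) := by
          simp only [r]
          field_simp
          ring
        rw [h₁r, one_div_div]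

lemma mul_three_pow_le_two_pow_mul_factorial {m : ℕ} (hm : 4 ≤ m) : m * 3 ^ m ≤ 2 ^ m * m ! := by
  induction m, hm using Nat.le_induction with
  | base => decide
  | succ m hm ih => calc
    (m + 1) * 3 ^ (m + 1) = (m + 1) * 3 ^ m * 3 := by ring
    _ ≤ (m + 1) * 3 ^ m * (2 * m) := by gcongr; omega
    _ = 2 * (m + 1) * (m * 3 ^ m) := by ring
    _ ≤ 2 * (m + 1) * (2 ^ m * m !) := by gcongr
    _ = 2 ^ (m + 1) * (m + 1)! := by rw [Nat.factorial_succ]; ring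

lemma half_pow_div_factorial_mul_le {m : ℕ} (hm : 4 ≤ m) :
    (1 / 2) ^ m / m ! * ((m + 1) / m) ≤ 1 / (m - 1) * exp (-(m - 1 / 2)) := by
  have hmR : (4 : ℝ) ≤ m := by exact_mod_cast hm
  have hexp : exp (m - 1 / 2) ≤ 3 ^ m := calc
    exp (m - 1 / 2) ≤ exp 1 ^ m := by rw [← exp_nat_mul]; gcongr; linarith
    _ ≤ 3 ^ m := by gcongr; exact exp_one_lt_d9.le.trans (by norm_num)
  have hkey : (m * 3 ^ m : ℝ) ≤ 2 ^ m * m ! := by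
    exact_mod_cast mul_three_pow_le_two_pow_mul_factorial hm
  have hlhs : (1 / 2 : ℝ) ^ m / m ! * ((m + 1) / m) = (m + 1) / (m * 2 ^ m * m !) := by
    rw [one_div_pow]
    field_simp
  have hrhs : 1 / (m - 1) * exp (-(m - 1 / 2)) = 1 / ((m - 1) * exp (m - 1 / 2)) := by
    rw [exp_neg]
    field_simp
  rw [hlhs, hrhs, div_le_div_iff₀ (by positivity) (by nlinarith [exp_pos (m - 1 / 2)])]
  calc (m + 1) * ((m - 1) * exp (m - 1 / 2)) = ((m + 1) * (m - 1)) * exp (m - 1 / 2) := by ring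
    _ ≤ (m * m) * 3 ^ m := mul_le_mul (by nlinarith) hexp (exp_pos _).le (by positivity)
    _ = m * (m * 3 ^ m) := by ring
    _ ≤ m * (2 ^ m * m !) := by gcongr
    _ = 1 * (m * 2 ^ m * m !) := by ring

theorem binomial_conditional_excess_bound_general (n k : ℕ) (hk : 2 * k ≤ n)
    (x : ℝ) (hx : 7 / 2 ≤ x) :
    (binCondExp n k x - x) * binTail n k x ≤ (1 / (x - 1)) * Real.exp (-(x - 1 / 2)) := by
  have hx₁ : 0 < x - 1 := by linarith
  rcases eq_or_ne (binTail n k x) 0 with h₀ | h₀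
  · rw [h₀, mul_zero]
    positivity
  have hp₀ : 0 ≤ 1 / (n : ℝ) := Nat.one_div_cast_nonneg n
  have hp₁ : 1 / (n : ℝ) ≤ 1 := by simpa using Nat.one_sub_one_div_cast_nonneg (α := ℝ) n
  have hkp : k * (1 / n : ℝ) ≤ 1 / 2 := by
    rcases n.eq_zero_or_pos with rfl | hn
    · simp
    · rw [mul_one_div, div_le_div_iff₀ (by positivity) two_pos]
      exact_mod_cast (by omega : k * 2 ≤ 1 * n)
  have hm : 4 ≤ ⌈x⌉₊ := Nat.lt_ceil.mpr (by norm_num; linarith)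
  calc (binCondExp n k x - x) * binTail n k x
      = ∑ i ∈ range (k + 1), if x ≤ i then (i - x) * binomialPMF k (1 / n) i else 0 :=
        binCondExp_sub_mul_binTail h₀
    _ ≤ ∑ i ∈ range (k + 1), if x ≤ i then (i - x) * ((1 / 2) ^ i / i !) else 0 := by
        refine sum_le_sum fun i _ => ?_
        split_ifs with hi
        · refine mul_le_mul_of_nonneg_left ?_ (by linarith)
          exact (binomialPMF_le_pow_div_factorial hp₀ hp₁ i).trans (by gcongr)
        · rfl
    _ ≤ (1 / 2) ^ ⌈x⌉₊ / ⌈x⌉₊ ! * ((⌈x⌉₊ + 1) / ⌈x⌉₊) :=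
        sum_excess_mul_half_pow_div_factorial_le (by linarith) _
    _ ≤ 1 / (⌈x⌉₊ - 1) * exp (-(⌈x⌉₊ - 1 / 2)) := half_pow_div_factorial_mul_le hm
    _ ≤ 1 / (x - 1) * exp (-(x - 1 / 2)) := by
        have := Nat.le_ceil x
        gcongr

/-- Lemma `binomial`: for `B ~ Binomial(k, 1/n)` with `k ≤ n/2` and any `x ≥ 7/2`,
`(E[B | B ≥ x] − x) · P[B ≥ x] ≤ (1/(x−1)) · exp(−(x − 1/2))`. -/
theorem binomial_conditional_excess_bound (n k : ℕ) (hn : 0 < n) (hk : 2 * k ≤ n)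
    (x : ℝ) (hx : 7 / 2 ≤ x) (hpos : 0 < binTail n k x) :
    (binCondExp n k x - x) * binTail n k x ≤ (1 / (x - 1)) * Real.exp (-(x - 1 / 2)) :=
  binomial_conditional_excess_bound_general n k hk x hx
end

section
/- Suppose there are at most 2n·ln(n) + n balls in total distributed among n bins, exactly k bins contain at least τ + 1 balls each, and τ − ln(n) > 0. Then the number of bins containing between τ − ln(n) and τ balls (inclusive) is at most (2n·ln(n) + n − k(τ + 1)) / (τ − ln(n)). In particular, if τ ≥ 4 ln n and n ≥ 16, this quantity is at most (3/4)n − k. -/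
open Finset
open scoped Classical

lemma log_lb' (n p q : ℕ) (h : (2.7182818286:ℝ)^p < (n:ℝ)^q) :
    (p:ℝ) < q * Real.log n := by
  have hle : Real.exp 1 ^ p ≤ (2.7182818286:ℝ)^p :=
    pow_le_pow_left₀ (Real.exp_pos 1).le Real.exp_one_lt_d9.le p
  rw [Real.exp_one_pow] at hle
  have h1 : Real.exp p < (n:ℝ)^q := lt_of_le_of_lt hle h
  have h2 := Real.log_lt_log (Real.exp_pos _) h1
  rwa [Real.log_exp, Real.log_pow] at h2

lemma log_ub' (n p q : ℕ) (hn : 0 < (n:ℝ)) (h : (n:ℝ)^q < (2.7182818283:ℝ)^p) :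
    (q:ℝ) * Real.log n < p := by
  have hle : (2.7182818283:ℝ)^p ≤ Real.exp 1 ^ p :=
    pow_le_pow_left₀ (by norm_num) Real.exp_one_gt_d9.le p
  rw [Real.exp_one_pow] at hle
  have h1 : (n:ℝ)^q < Real.exp p := lt_of_lt_of_le h hle
  have h2 := Real.log_lt_log (by positivity) h1
  rwa [Real.log_exp, Real.log_pow] at h2

lemma key_numeric (n : ℕ) (hn : 16 ≤ n) (hn' : n ≤ 54) :
    ∃ c f : ℕ, 0 < c ∧ (f:ℝ) ≤ 3/4 * n ∧ (c:ℝ) < 3 * Real.log n + 1 ∧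
      2*n*Real.log n + n < c * ((f:ℝ)+1) := by
  interval_cases n
  · refine ⟨9, 12, by norm_num, by norm_num, ?_, ?_⟩
    · have h := log_lb' 16 8 3 (by norm_num)
      push_cast at h ⊢; linarith
    · have h := log_ub' 16 3 1 (by norm_num) (by norm_num)
      push_cast at h ⊢; linarith
  · refine ⟨9, 12, by norm_num, by norm_num, ?_, ?_⟩
    · have h := log_lb' 17 8 3 (by norm_num)
      push_cast at h ⊢; linarith
    · have h := log_ub' 17 17 6 (by norm_num) (by norm_num)
      push_cast at h ⊢; linarith
  · refine ⟨9, 13, by norm_num, by norm_num, ?_, ?_⟩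
    · have h := log_lb' 18 8 3 (by norm_num)
      push_cast at h ⊢; linarith
    · have h := log_ub' 18 3 1 (by norm_num) (by norm_num)
      push_cast at h ⊢; linarith
  · refine ⟨9, 14, by norm_num, by norm_num, ?_, ?_⟩
    · have h := log_lb' 19 8 3 (by norm_num)
      push_cast at h ⊢; linarith
    · have h := log_ub' 19 3 1 (by norm_num) (by norm_num)
      push_cast at h ⊢; linarith
  · refine ⟨9, 15, by norm_num, by norm_num, ?_, ?_⟩
    · have h := log_lb' 20 8 3 (by norm_num)
      push_cast at h ⊢; linarith
    · have h := log_ub' 20 3 1 (by norm_num) (by norm_num)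
      push_cast at h ⊢; linarith
  · refine ⟨10, 15, by norm_num, by norm_num, ?_, ?_⟩
    · have h := log_lb' 21 9 3 (by norm_num)
      push_cast at h ⊢; linarith
    · have h := log_ub' 21 13 4 (by norm_num) (by norm_num)
      push_cast at h ⊢; linarith
  · refine ⟨10, 16, by norm_num, by norm_num, ?_, ?_⟩
    · have h := log_lb' 22 9 3 (by norm_num)
      push_cast at h ⊢; linarith
    · have h := log_ub' 22 10 3 (by norm_num) (by norm_num)
      push_cast at h ⊢; linarith
  · refine ⟨10, 17, by norm_num, by norm_num, ?_, ?_⟩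
    · have h := log_lb' 23 9 3 (by norm_num)
      push_cast at h ⊢; linarith
    · have h := log_ub' 23 10 3 (by norm_num) (by norm_num)
      push_cast at h ⊢; linarith
  · refine ⟨10, 18, by norm_num, by norm_num, ?_, ?_⟩
    · have h := log_lb' 24 9 3 (by norm_num)
      push_cast at h ⊢; linarith
    · have h := log_ub' 24 10 3 (by norm_num) (by norm_num)
      push_cast at h ⊢; linarith
  · refine ⟨10, 18, by norm_num, by norm_num, ?_, ?_⟩
    · have h := log_lb' 25 9 3 (by norm_num)
      push_cast at h ⊢; linarith
    · have h := log_ub' 25 13 4 (by norm_num) (by norm_num)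
      push_cast at h ⊢; linarith
  · refine ⟨10, 19, by norm_num, by norm_num, ?_, ?_⟩
    · have h := log_lb' 26 9 3 (by norm_num)
      push_cast at h ⊢; linarith
    · have h := log_ub' 26 10 3 (by norm_num) (by norm_num)
      push_cast at h ⊢; linarith
  · refine ⟨10, 20, by norm_num, by norm_num, ?_, ?_⟩
    · have h := log_lb' 27 9 3 (by norm_num)
      push_cast at h ⊢; linarith
    · have h := log_ub' 27 10 3 (by norm_num) (by norm_num)
      push_cast at h ⊢; linarith
  · refine ⟨10, 21, by norm_num, by norm_num, ?_, ?_⟩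
    · have h := log_lb' 28 9 3 (by norm_num)
      push_cast at h ⊢; linarith
    · have h := log_ub' 28 10 3 (by norm_num) (by norm_num)
      push_cast at h ⊢; linarith
  · refine ⟨11, 21, by norm_num, by norm_num, ?_, ?_⟩
    · have h := log_lb' 29 10 3 (by norm_num)
      push_cast at h ⊢; linarith
    · have h := log_ub' 29 7 2 (by norm_num) (by norm_num)
      push_cast at h ⊢; linarith
  · refine ⟨11, 22, by norm_num, by norm_num, ?_, ?_⟩
    · have h := log_lb' 30 10 3 (by norm_num)
      push_cast at h ⊢; linarith
    · have h := log_ub' 30 7 2 (by norm_num) (by norm_num)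
      push_cast at h ⊢; linarith
  · refine ⟨11, 23, by norm_num, by norm_num, ?_, ?_⟩
    · have h := log_lb' 31 10 3 (by norm_num)
      push_cast at h ⊢; linarith
    · have h := log_ub' 31 7 2 (by norm_num) (by norm_num)
      push_cast at h ⊢; linarith
  · refine ⟨11, 24, by norm_num, by norm_num, ?_, ?_⟩
    · have h := log_lb' 32 10 3 (by norm_num)
      push_cast at h ⊢; linarith
    · have h := log_ub' 32 7 2 (by norm_num) (by norm_num)
      push_cast at h ⊢; linarith
  · refine ⟨11, 24, by norm_num, by norm_num, ?_, ?_⟩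
    · have h := log_lb' 33 10 3 (by norm_num)
      push_cast at h ⊢; linarith
    · have h := log_ub' 33 7 2 (by norm_num) (by norm_num)
      push_cast at h ⊢; linarith
  · refine ⟨11, 25, by norm_num, by norm_num, ?_, ?_⟩
    · have h := log_lb' 34 10 3 (by norm_num)
      push_cast at h ⊢; linarith
    · have h := log_ub' 34 11 3 (by norm_num) (by norm_num)
      push_cast at h ⊢; linarith
  · refine ⟨11, 26, by norm_num, by norm_num, ?_, ?_⟩
    · have h := log_lb' 35 10 3 (by norm_num)
      push_cast at h ⊢; linarith
    · have h := log_ub' 35 11 3 (by norm_num) (by norm_num)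
      push_cast at h ⊢; linarith
  · refine ⟨11, 27, by norm_num, by norm_num, ?_, ?_⟩
    · have h := log_lb' 36 10 3 (by norm_num)
      push_cast at h ⊢; linarith
    · have h := log_ub' 36 11 3 (by norm_num) (by norm_num)
      push_cast at h ⊢; linarith
  · refine ⟨11, 27, by norm_num, by norm_num, ?_, ?_⟩
    · have h := log_lb' 37 10 3 (by norm_num)
      push_cast at h ⊢; linarith
    · have h := log_ub' 37 29 8 (by norm_num) (by norm_num)
      push_cast at h ⊢; linarith
  · refine ⟨11, 28, by norm_num, by norm_num, ?_, ?_⟩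
    · have h := log_lb' 38 10 3 (by norm_num)
      push_cast at h ⊢; linarith
    · have h := log_ub' 38 11 3 (by norm_num) (by norm_num)
      push_cast at h ⊢; linarith
  · refine ⟨11, 29, by norm_num, by norm_num, ?_, ?_⟩
    · have h := log_lb' 39 10 3 (by norm_num)
      push_cast at h ⊢; linarith
    · have h := log_ub' 39 11 3 (by norm_num) (by norm_num)
      push_cast at h ⊢; linarith
  · refine ⟨12, 30, by norm_num, by norm_num, ?_, ?_⟩
    · have h := log_lb' 40 11 3 (by norm_num)
      push_cast at h ⊢; linarith
    · have h := log_ub' 40 4 1 (by norm_num) (by norm_num)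
      push_cast at h ⊢; linarith
  · refine ⟨12, 30, by norm_num, by norm_num, ?_, ?_⟩
    · have h := log_lb' 41 11 3 (by norm_num)
      push_cast at h ⊢; linarith
    · have h := log_ub' 41 4 1 (by norm_num) (by norm_num)
      push_cast at h ⊢; linarith
  · refine ⟨12, 31, by norm_num, by norm_num, ?_, ?_⟩
    · have h := log_lb' 42 11 3 (by norm_num)
      push_cast at h ⊢; linarith
    · have h := log_ub' 42 4 1 (by norm_num) (by norm_num)
      push_cast at h ⊢; linarith
  · refine ⟨12, 32, by norm_num, by norm_num, ?_, ?_⟩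
    · have h := log_lb' 43 11 3 (by norm_num)
      push_cast at h ⊢; linarith
    · have h := log_ub' 43 4 1 (by norm_num) (by norm_num)
      push_cast at h ⊢; linarith
  · refine ⟨12, 33, by norm_num, by norm_num, ?_, ?_⟩
    · have h := log_lb' 44 11 3 (by norm_num)
      push_cast at h ⊢; linarith
    · have h := log_ub' 44 4 1 (by norm_num) (by norm_num)
      push_cast at h ⊢; linarith
  · refine ⟨12, 33, by norm_num, by norm_num, ?_, ?_⟩
    · have h := log_lb' 45 11 3 (by norm_num)
      push_cast at h ⊢; linarith
    · have h := log_ub' 45 4 1 (by norm_num) (by norm_num)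
      push_cast at h ⊢; linarith
  · refine ⟨12, 34, by norm_num, by norm_num, ?_, ?_⟩
    · have h := log_lb' 46 11 3 (by norm_num)
      push_cast at h ⊢; linarith
    · have h := log_ub' 46 4 1 (by norm_num) (by norm_num)
      push_cast at h ⊢; linarith
  · refine ⟨12, 35, by norm_num, by norm_num, ?_, ?_⟩
    · have h := log_lb' 47 11 3 (by norm_num)
      push_cast at h ⊢; linarith
    · have h := log_ub' 47 4 1 (by norm_num) (by norm_num)
      push_cast at h ⊢; linarith
  · refine ⟨12, 36, by norm_num, by norm_num, ?_, ?_⟩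
    · have h := log_lb' 48 11 3 (by norm_num)
      push_cast at h ⊢; linarith
    · have h := log_ub' 48 4 1 (by norm_num) (by norm_num)
      push_cast at h ⊢; linarith
  · refine ⟨12, 36, by norm_num, by norm_num, ?_, ?_⟩
    · have h := log_lb' 49 11 3 (by norm_num)
      push_cast at h ⊢; linarith
    · have h := log_ub' 49 4 1 (by norm_num) (by norm_num)
      push_cast at h ⊢; linarith
  · refine ⟨12, 37, by norm_num, by norm_num, ?_, ?_⟩
    · have h := log_lb' 50 11 3 (by norm_num)
      push_cast at h ⊢; linarith
    · have h := log_ub' 50 4 1 (by norm_num) (by norm_num)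
      push_cast at h ⊢; linarith
  · refine ⟨12, 38, by norm_num, by norm_num, ?_, ?_⟩
    · have h := log_lb' 51 11 3 (by norm_num)
      push_cast at h ⊢; linarith
    · have h := log_ub' 51 4 1 (by norm_num) (by norm_num)
      push_cast at h ⊢; linarith
  · refine ⟨12, 39, by norm_num, by norm_num, ?_, ?_⟩
    · have h := log_lb' 52 11 3 (by norm_num)
      push_cast at h ⊢; linarith
    · have h := log_ub' 52 4 1 (by norm_num) (by norm_num)
      push_cast at h ⊢; linarith
  · refine ⟨12, 39, by norm_num, by norm_num, ?_, ?_⟩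
    · have h := log_lb' 53 11 3 (by norm_num)
      push_cast at h ⊢; linarith
    · have h := log_ub' 53 4 1 (by norm_num) (by norm_num)
      push_cast at h ⊢; linarith
  · refine ⟨12, 40, by norm_num, by norm_num, ?_, ?_⟩
    · have h := log_lb' 54 11 3 (by norm_num)
      push_cast at h ⊢; linarith
    · have h := log_ub' 54 4 1 (by norm_num) (by norm_num)
      push_cast at h ⊢; linarith

/-- Counting argument from the second-phase drift analysis of Theorem 1:
with at most `2n ln n + n` balls in `n` bins, exactly `k` bins holding at least
`τ + 1` balls, and `τ − ln n > 0`, the number of bins with load in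
`[τ − ln n, τ]` is at most `(2n ln n + n − k(τ+1))/(τ − ln n)`; in particular,
if `τ ≥ 4 ln n` and `n ≥ 16`, this quantity is at most `(3/4)n − k`. -/
theorem middle_bins_count_bound (n : ℕ) (X : Fin n → ℕ) (τ : ℝ) (k : ℕ)
    (htot : ∑ i, (X i : ℝ) ≤ 2 * n * Real.log n + n)
    (hτ : Real.log n < τ)
    (hk : k = (Finset.univ.filter fun i => τ + 1 ≤ (X i : ℝ)).card) :
    ((Finset.univ.filter fun i => τ - Real.log n ≤ (X i : ℝ) ∧ (X i : ℝ) ≤ τ).card : ℝ)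
        ≤ (2 * n * Real.log n + n - k * (τ + 1)) / (τ - Real.log n) ∧
    (4 * Real.log n ≤ τ → 16 ≤ n →
      ((Finset.univ.filter fun i => τ - Real.log n ≤ (X i : ℝ) ∧ (X i : ℝ) ≤ τ).card : ℝ)
        ≤ (3 / 4) * n - k) := by
  subst hk
  set L := Real.log n with hLdef
  set A := (Finset.univ.filter fun i => τ + 1 ≤ (X i : ℝ)) with hA
  set M := (Finset.univ.filter fun i => τ - L ≤ (X i : ℝ) ∧ (X i : ℝ) ≤ τ) with hM
  have hdisj : Disjoint A M := by
    rw [Finset.disjoint_left]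
    intro i hiA hiM
    rw [hA, Finset.mem_filter] at hiA
    rw [hM, Finset.mem_filter] at hiM
    linarith [hiA.2, hiM.2.2]
  have hpos : 0 < τ - L := by linarith
  have hsumA : (A.card : ℝ) * (τ + 1) ≤ ∑ i ∈ A, (X i : ℝ) := by
    have := Finset.card_nsmul_le_sum A (fun i => (X i : ℝ)) (τ + 1)
      (fun i hi => (Finset.mem_filter.mp hi).2)
    simpa only [nsmul_eq_mul] using this
  have hsumM : (M.card : ℝ) * (τ - L) ≤ ∑ i ∈ M, (X i : ℝ) := by
    have := Finset.card_nsmul_le_sum M (fun i => (X i : ℝ)) (τ - L)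
      (fun i hi => (Finset.mem_filter.mp hi).2.1)
    simpa only [nsmul_eq_mul] using this
  have hsub : ∑ i ∈ A, (X i : ℝ) + ∑ i ∈ M, (X i : ℝ) ≤ ∑ i, (X i : ℝ) := by
    rw [← Finset.sum_union hdisj]
    exact Finset.sum_le_sum_of_subset_of_nonneg (Finset.subset_univ _)
      (fun i _ _ => by positivity)
  have hmain : (A.card : ℝ) * (τ + 1) + (M.card : ℝ) * (τ - L) ≤ 2 * n * L + n := by
    linarith
  constructor
  · rw [le_div_iff₀ hpos]
    linarith
  · intro hτ4 hn16
    have hnR : (16 : ℝ) ≤ n := by exact_mod_cast hn16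
    have hL0 : 0 < L := by
      rw [hLdef]
      exact Real.log_pos (by linarith)
    -- key nat inequality
    have hnat : (A.card + M.card) * ⌈τ - L⌉₊ ≤ ∑ i, X i := by
      have hAM : ∀ i ∈ A ∪ M, ⌈τ - L⌉₊ ≤ X i := by
        intro i hi
        rcases Finset.mem_union.mp hi with h | h
        · exact Nat.ceil_le.mpr (le_trans (by linarith) (Finset.mem_filter.mp h).2)
        · exact Nat.ceil_le.mpr (Finset.mem_filter.mp h).2.1
      calc (A.card + M.card) * ⌈τ - L⌉₊ = (A ∪ M).card * ⌈τ - L⌉₊ := by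
            rw [Finset.card_union_of_disjoint hdisj]
        _ ≤ ∑ i ∈ A ∪ M, X i := by
            have := Finset.card_nsmul_le_sum (A ∪ M) X (⌈τ - L⌉₊) hAM
            simpa only [smul_eq_mul] using this
        _ ≤ ∑ i, X i := Finset.sum_le_sum_of_subset (Finset.subset_univ _)
    have hnatR : ((A.card : ℝ) + M.card) * (⌈τ - L⌉₊ : ℝ) ≤ 2 * n * L + n := by
      have h1 : (((A.card + M.card) * ⌈τ - L⌉₊ : ℕ) : ℝ) ≤ ((∑ i, X i : ℕ) : ℝ) := by
        exact_mod_cast hnat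
      push_cast at h1
      calc ((A.card : ℝ) + M.card) * (⌈τ - L⌉₊ : ℝ) ≤ ∑ i, (X i : ℝ) := h1
        _ ≤ 2 * n * L + n := htot
    by_cases hbig : 55 ≤ n
    · -- large n : pure real argument, L ≥ 4
      have h55 : (4 : ℝ) < Real.log 55 := by
        have h := log_lb' 55 4 1 (by norm_num)
        push_cast at h; linarith
      have hL4 : (4 : ℝ) ≤ L := by
        have : Real.log 55 ≤ L := by
          rw [hLdef]
          exact Real.log_le_log (by norm_num) (by exact_mod_cast hbig)
        linarith
      have hAc : (0 : ℝ) ≤ (A.card : ℝ) := by positivity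
      have hreal : ((A.card : ℝ) + M.card) * (τ - L) ≤ 2 * n * L + n := by
        nlinarith
      have h1 : 2 * n * L + n ≤ 3 / 4 * n * (τ - L) := by nlinarith
      have h2 : (A.card : ℝ) + M.card ≤ 3 / 4 * n := by
        have := le_trans hreal h1
        exact le_of_mul_le_mul_right this hpos
      linarith
    · -- medium n : 16 ≤ n ≤ 54, use integrality
      obtain ⟨c, f, hc0, hf, hc1, hc2⟩ := key_numeric n hn16 (by omega)
      have hcle : c ≤ ⌈τ - L⌉₊ := by
        have h1 : ((c - 1 : ℕ) : ℝ) < τ - L := by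
          rw [Nat.cast_sub hc0]
          push_cast
          linarith
        have := Nat.lt_ceil.mpr h1
        omega
      have hccR : ((A.card : ℝ) + M.card) * (c : ℝ) ≤ 2 * n * L + n := by
        have hcc : ((c : ℝ)) ≤ (⌈τ - L⌉₊ : ℝ) := by exact_mod_cast hcle
        have hAMnn : (0 : ℝ) ≤ (A.card : ℝ) + M.card := by positivity
        calc ((A.card : ℝ) + M.card) * (c : ℝ)
            ≤ ((A.card : ℝ) + M.card) * (⌈τ - L⌉₊ : ℝ) := by
              exact mul_le_mul_of_nonneg_left hcc hAMnn
          _ ≤ 2 * n * L + n := hnatR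
      have hlt : ((A.card : ℝ) + M.card) * (c : ℝ) < (c : ℝ) * ((f : ℝ) + 1) :=
        lt_of_le_of_lt hccR hc2
      have hc0R : (0 : ℝ) < (c : ℝ) := by exact_mod_cast hc0
      have hAMlt : (A.card : ℝ) + M.card < (f : ℝ) + 1 := by
        nlinarith
      have hAMle : A.card + M.card ≤ f := by
        have : ((A.card + M.card : ℕ) : ℝ) < ((f + 1 : ℕ) : ℝ) := by push_cast; linarith
        have := Nat.cast_lt.mp this
        omega
      have : ((A.card + M.card : ℕ) : ℝ) ≤ (f : ℝ) := by exact_mod_cast hAMle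
      push_cast at this
      linarith
end
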